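/- arXiv:hep-th/0405118 — 5 statements merged into one kernel-verified Lean document; each statement's English description precedes it below -/
import Mathlib

section
/- Let S be an n×n unit upper-triangular matrix over a commutative ring (S_{kl} = 0 for k > l, S_{kk} = 1). Then for all indices i < j, the double sum ∑_{k=1}^{i} ∑_{l=1}^{j} S_{k,i} S_{l,j} ((S⁻¹)_{l,k} − (S⁻¹)_{k,l}) equals S_{i,j}. -/
/-- For a unit upper-triangular matrix `S` over a commutative ring and
indices `i < j`, `∑_{k ≤ i} ∑_{l ≤ j} S_{k,i} S_{l,j} ((S⁻¹)_{l,k} − (S⁻¹)_{k,l}) = S_{i,j}`. -/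
theorem double_sum_identity {R : Type*} [CommRing R] {n : ℕ}
    (S : Matrix (Fin n) (Fin n) R)
    (hupper : ∀ k l : Fin n, l < k → S k l = 0)
    (hdiag : ∀ k : Fin n, S k k = 1) :
    ∀ i j : Fin n, i < j →
      ∑ k ∈ Finset.Iic i, ∑ l ∈ Finset.Iic j,
        S k i * S l j * (S⁻¹ l k - S⁻¹ k l) = S i j := by
  intro i j hij
  have hdet : S.det = 1 := by
    rw [Matrix.det_of_upperTriangular (fun a b h => hupper a b h)]
    simp [hdiag]
  have hinv : S⁻¹ * S = 1 := Matrix.nonsing_inv_mul S (by simp [hdet])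
  have key : ∀ a b : Fin n, ∑ k : Fin n, S⁻¹ a k * S k b
      = (1 : Matrix (Fin n) (Fin n) R) a b := by
    intro a b; rw [← Matrix.mul_apply, hinv]
  have h1 : ∑ k ∈ Finset.Iic i, ∑ l ∈ Finset.Iic j,
        S k i * S l j * (S⁻¹ l k - S⁻¹ k l)
      = ∑ k : Fin n, ∑ l : Fin n, S k i * S l j * (S⁻¹ l k - S⁻¹ k l) := by
    rw [Finset.sum_subset (Finset.subset_univ _)
      (by
        intro k _ hk
        have : i < k := by simpa using hk
        simp [hupper k i this])]
    refine Finset.sum_congr rfl fun k _ => ?_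
    rw [Finset.sum_subset (Finset.subset_univ _)
      (by
        intro l _ hl
        have : j < l := by simpa using hl
        simp [hupper l j this])]
  rw [h1]
  have h2 : ∑ k : Fin n, ∑ l : Fin n, S k i * S l j * (S⁻¹ l k - S⁻¹ k l)
      = (∑ l : Fin n, S l j * ∑ k : Fin n, S⁻¹ l k * S k i)
        - ∑ k : Fin n, S k i * ∑ l : Fin n, S⁻¹ k l * S l j := by
    simp only [mul_sub, Finset.sum_sub_distrib, Finset.mul_sum]
    congr 1
    · rw [Finset.sum_comm]
      exact Finset.sum_congr rfl fun l _ => Finset.sum_congr rfl fun k _ => by ring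
    · exact Finset.sum_congr rfl fun k _ => Finset.sum_congr rfl fun l _ => by ring
  rw [h2]
  simp only [key, Matrix.one_apply]
  rw [Finset.sum_congr rfl (fun l _ => by rw [mul_ite, mul_one, mul_zero]),
    Finset.sum_ite_eq' Finset.univ i (fun l => S l j),
    Finset.sum_congr rfl (fun k _ => by rw [mul_ite, mul_one, mul_zero]),
    Finset.sum_ite_eq' Finset.univ j (fun k => S k i)]
  simp [hupper j i hij]
end

section
/- Let S be an n×n unit upper-triangular matrix over ℚ, and let r, d ∈ ℚⁿ satisfy the relation r_i d_k − r_k d_i = (S⁻¹)_{i,k} − (S⁻¹)_{k,i} for all i, k. Fix an index a with 1 ≤ a < n and set r′ = −∑_{i=a+1}^{n} S_{i,n} r_i and d′ = −∑_{i=a+1}^{n} S_{i,n} d_i. Then d′ r_a − r′ d_a = S_{a,n}. In particular, if r_a > 0, r′ > 0 and S_{a,n} ≥ 0, then d′/r′ ≥ d_a/r_a. -/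
/-- Lemma `ineqone`: Let `S` be unit upper-triangular over `ℚ` and
`r, d` satisfy `r i * d k − r k * d i = (S⁻¹) i k − (S⁻¹) k i`.  For an index `a`
before the last index, setting `r′ = −∑_{i > a} S i last * r i` and
`d′ = −∑_{i > a} S i last * d i` (sums over `a < i ≤ last`, i.e. paper indices
`a+1, …, n`), one has `d′ * r a − r′ * d a = S a last`; in particular if
`r a > 0`, `r′ > 0` and `S a last ≥ 0`, then `d a / r a ≤ d′ / r′`. -/
theorem seiberg_dual_slope_lower_bound {n : ℕ}
    (S : Matrix (Fin (n + 1)) (Fin (n + 1)) ℚ)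
    (hupper : ∀ i j : Fin (n + 1), j < i → S i j = 0)
    (hdiag : ∀ i : Fin (n + 1), S i i = 1)
    (r d : Fin (n + 1) → ℚ)
    (hrel : ∀ i k : Fin (n + 1), r i * d k - r k * d i = S⁻¹ i k - S⁻¹ k i)
    (a : Fin (n + 1)) (ha : a < Fin.last n)
    (r' d' : ℚ)
    (hr' : r' = -∑ i ∈ Finset.Ioc a (Fin.last n), S i (Fin.last n) * r i)
    (hd' : d' = -∑ i ∈ Finset.Ioc a (Fin.last n), S i (Fin.last n) * d i) :
    d' * r a - r' * d a = S a (Fin.last n) ∧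
      (0 < r a → 0 < r' → 0 ≤ S a (Fin.last n) → d a / r a ≤ d' / r') := by
  have hBT : S.BlockTriangular id := fun i j h => hupper i j h
  have hdet : S.det = 1 := by
    rw [Matrix.det_of_upperTriangular hBT]
    simp [hdiag]
  have hdu : IsUnit S.det := by rw [hdet]; exact isUnit_one
  haveI : Invertible S := S.invertibleOfIsUnitDet hdu
  have hTBT : (S⁻¹).BlockTriangular id :=
    Matrix.blockTriangular_inv_of_blockTriangular hBT
  have hTlow : ∀ i j : Fin (n + 1), j < i → S⁻¹ i j = 0 := fun i j h => hTBT h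
  have hinv : S⁻¹ * S = 1 := Matrix.nonsing_inv_mul S hdu
  -- split univ into Iic a and Ioc a last
  have hsplit : (Finset.Iic a) ∪ Finset.Ioc a (Fin.last n) = Finset.univ := by
    ext i
    simp only [Finset.mem_union, Finset.mem_Iic, Finset.mem_Ioc, Finset.mem_univ, iff_true]
    rcases le_or_gt i a with h | h
    · exact Or.inl h
    · exact Or.inr ⟨h, Fin.le_last i⟩
  have hdisj : Disjoint (Finset.Iic a) (Finset.Ioc a (Fin.last n)) := by
    rw [Finset.disjoint_left]
    intro i hi hi'
    exact absurd (Finset.mem_Ioc.mp hi').1 (not_lt.mpr (Finset.mem_Iic.mp hi))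
  -- diagonal of inverse is 1
  have hTaa : S⁻¹ a a = 1 := by
    have h1 : (S⁻¹ * S) a a = 1 := by rw [hinv]; simp
    rw [Matrix.mul_apply, ← hsplit, Finset.sum_union hdisj] at h1
    have h2 : ∑ i ∈ Finset.Ioc a (Fin.last n), S⁻¹ a i * S i a = 0 :=
      Finset.sum_eq_zero fun i hi => by
        rw [hupper i a (Finset.mem_Ioc.mp hi).1, mul_zero]
    have h3 : ∑ i ∈ Finset.Iic a, S⁻¹ a i * S i a = S⁻¹ a a := by
      rw [Finset.sum_eq_single a]
      · rw [hdiag, mul_one]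
      · intro i hi hne
        rw [hTlow a i (lt_of_le_of_ne (Finset.mem_Iic.mp hi) hne), zero_mul]
      · intro h; exact absurd (Finset.mem_Iic.mpr le_rfl) h
    rw [h2, h3, add_zero] at h1
    exact h1
  -- key sum
  have hkey : ∑ i ∈ Finset.Ioc a (Fin.last n), S⁻¹ a i * S i (Fin.last n)
      = - S a (Fin.last n) := by
    have h0 : (S⁻¹ * S) a (Fin.last n) = 0 := by
      rw [hinv]
      exact Matrix.one_apply_ne ha.ne
    rw [Matrix.mul_apply, ← hsplit, Finset.sum_union hdisj] at h0
    have h3 : ∑ i ∈ Finset.Iic a, S⁻¹ a i * S i (Fin.last n) = S a (Fin.last n) := by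
      rw [Finset.sum_eq_single a]
      · rw [hTaa, one_mul]
      · intro i hi hne
        rw [hTlow a i (lt_of_le_of_ne (Finset.mem_Iic.mp hi) hne), zero_mul]
      · intro h; exact absurd (Finset.mem_Iic.mpr le_rfl) h
    rw [h3] at h0
    linarith
  have hmain : d' * r a - r' * d a = S a (Fin.last n) := by
    rw [hr', hd']
    have hterm : ∀ i ∈ Finset.Ioc a (Fin.last n),
        S i (Fin.last n) * r i * d a - S i (Fin.last n) * d i * r a
          = - (S⁻¹ a i * S i (Fin.last n)) := by
      intro i hi
      have h := hrel i a
      rw [hTlow i a (Finset.mem_Ioc.mp hi).1] at h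
      linear_combination S i (Fin.last n) * h
    calc (-∑ i ∈ Finset.Ioc a (Fin.last n), S i (Fin.last n) * d i) * r a
          - (-∑ i ∈ Finset.Ioc a (Fin.last n), S i (Fin.last n) * r i) * d a
        = ∑ i ∈ Finset.Ioc a (Fin.last n),
            (S i (Fin.last n) * r i * d a - S i (Fin.last n) * d i * r a) := by
          rw [Finset.sum_sub_distrib, ← Finset.sum_mul, ← Finset.sum_mul]
          ring
      _ = ∑ i ∈ Finset.Ioc a (Fin.last n), - (S⁻¹ a i * S i (Fin.last n)) :=
          Finset.sum_congr rfl hterm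
      _ = S a (Fin.last n) := by rw [Finset.sum_neg_distrib, hkey, neg_neg]
  refine ⟨hmain, fun hra hr'pos hS => ?_⟩
  rw [div_le_div_iff₀ hra hr'pos]
  nlinarith [hmain]
end

section
/- Let S be an n×n unit upper-triangular matrix over ℚ, and let r, d ∈ ℚⁿ satisfy the relation r_i d_k − r_k d_i = (S⁻¹)_{i,k} − (S⁻¹)_{k,i} for all i, k. Fix an index m with 1 < m ≤ n and set r′ = −∑_{i=1}^{m−1} S_{1,i} r_i and d′ = −∑_{i=1}^{m−1} S_{1,i} d_i. Then d′ r_m − r′ d_m = −S_{1,m}. In particular, if r_m > 0, r′ > 0 and S_{1,m} ≥ 0, then d′/r′ ≤ d_m/r_m. -/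
/-- Lemma `ineqtwo`: Let `S` be unit upper-triangular over `ℚ` and
`r, d` satisfy `r i * d k − r k * d i = (S⁻¹) i k − (S⁻¹) k i`.  For an index `m`
after the first index `0` (paper index `1`), setting
`r′ = −∑_{i < m} S 0 i * r i` and `d′ = −∑_{i < m} S 0 i * d i` (paper sums
`∑_{i=1}^{m−1}`), one has `d′ * r m − r′ * d m = −S 0 m`; in particular if
`r m > 0`, `r′ > 0` and `S 0 m ≥ 0`, then `d′ / r′ ≤ d m / r m`. -/
theorem seiberg_dual_slope_upper_bound {n : ℕ}
    (S : Matrix (Fin (n + 1)) (Fin (n + 1)) ℚ)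
    (hupper : ∀ i j : Fin (n + 1), j < i → S i j = 0)
    (hdiag : ∀ i : Fin (n + 1), S i i = 1)
    (r d : Fin (n + 1) → ℚ)
    (hrel : ∀ i k : Fin (n + 1), r i * d k - r k * d i = S⁻¹ i k - S⁻¹ k i)
    (m : Fin (n + 1)) (hm : 0 < m)
    (r' d' : ℚ)
    (hr' : r' = -∑ i ∈ Finset.Iio m, S 0 i * r i)
    (hd' : d' = -∑ i ∈ Finset.Iio m, S 0 i * d i) :
    d' * r m - r' * d m = -S 0 m ∧
      (0 < r m → 0 < r' → 0 ≤ S 0 m → d' / r' ≤ d m / r m) := by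
  have hbt : S.BlockTriangular id := fun i j h => hupper i j h
  have hdet : S.det = 1 := by
    rw [Matrix.det_of_upperTriangular hbt]
    simp [hdiag]
  have hunit : IsUnit S.det := by rw [hdet]; exact isUnit_one
  haveI : Invertible S := S.invertibleOfIsUnitDet hunit
  have hbtinv : S⁻¹.BlockTriangular id := Matrix.blockTriangular_inv_of_blockTriangular hbt
  -- inverse is zero below the diagonal
  have hinv_lower : ∀ i j : Fin (n + 1), j < i → S⁻¹ i j = 0 := fun i j h => hbtinv h
  -- S⁻¹ m m = 1, from (S⁻¹ * S) m m = 1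
  have hmulinv : S⁻¹ * S = 1 := Matrix.nonsing_inv_mul S hunit
  have hinvdiag : S⁻¹ m m = 1 := by
    have h1 : (S⁻¹ * S) m m = 1 := by rw [hmulinv]; simp
    rw [Matrix.mul_apply] at h1
    rw [Finset.sum_eq_single m] at h1
    · simpa [hdiag] using h1
    · intro j _ hj
      rcases lt_or_gt_of_ne hj with h | h
      · rw [hinv_lower m j h, zero_mul]
      · rw [hupper j m h, mul_zero]
    · simp
  have hmul : S * S⁻¹ = 1 := Matrix.mul_nonsing_inv S hunit
  have hSm : (S * S⁻¹) 0 m = 0 := by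
    rw [hmul]
    exact Matrix.one_apply_ne (Fin.ne_of_lt hm)
  rw [Matrix.mul_apply] at hSm
  have hsplit : ∑ j, S 0 j * S⁻¹ j m
      = (∑ j ∈ Finset.Iio m, S 0 j * S⁻¹ j m) + S 0 m := by
    rw [← Finset.sum_filter_add_sum_filter_not Finset.univ (· < m)]
    congr 1
    · congr 1
      ext j
      simp [Finset.mem_Iio]
    · rw [Finset.sum_eq_single m]
      · rw [hinvdiag, mul_one]
      · intro j hj hjm
        have : m < j := lt_of_le_of_ne (not_lt.mp (by simpa using hj)) (Ne.symm hjm)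
        rw [hinv_lower j m this, mul_zero]
      · simp
  have hkey : ∑ j ∈ Finset.Iio m, S 0 j * S⁻¹ j m = -S 0 m := by
    have := hSm
    rw [hsplit] at this
    linarith
  have hmain : d' * r m - r' * d m = -S 0 m := by
    have hcalc : d' * r m - r' * d m
        = ∑ j ∈ Finset.Iio m, S 0 j * (r j * d m - r m * d j) := by
      rw [hr', hd', neg_mul, neg_mul, Finset.sum_mul, Finset.sum_mul,
        sub_neg_eq_add, neg_add_eq_sub, ← Finset.sum_sub_distrib]
      exact Finset.sum_congr rfl fun j _ => by ring
    rw [hcalc]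
    have : ∀ j ∈ Finset.Iio m, S 0 j * (r j * d m - r m * d j) = S 0 j * S⁻¹ j m := by
      intro j hj
      rw [hrel j m, hinv_lower m j (Finset.mem_Iio.mp hj)]
      ring
    rw [Finset.sum_congr rfl this, hkey]
  refine ⟨hmain, fun hrm hr'pos hS0m => ?_⟩
  rw [div_le_div_iff₀ hr'pos hrm]
  nlinarith [hmain]
end

section
/- Let S be an n×n unit upper-triangular matrix over ℚ, and let ρ, δ ∈ ℚⁿ satisfy δ_i ρ_k − δ_k ρ_i = S_{i,k} − S_{k,i} for all i, k. Define r_j = ∑_{i=1}^{j} (S⁻¹)_{i,j} ρ_i and d_j = ∑_{i=1}^{j} (S⁻¹)_{i,j} δ_i for each j. Then for every j with 1 < j ≤ n one has d_{j−1} r_j − r_{j−1} d_j = S_{j−1,j}. In particular, if r_{j−1} > 0 and r_j > 0, then d_{j−1}/r_{j−1} ≤ d_j/r_j if and only if S_{j−1,j} ≤ 0. -/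
open Matrix


/-- Let `S` be unit upper-triangular over `ℚ` and `ρ, δ` satisfy
`δ i * ρ k − δ k * ρ i = S i k − S k i`.  Define `r j = ∑_{i ≤ j} (S⁻¹) i j * ρ i`
and `d j = ∑_{i ≤ j} (S⁻¹) i j * δ i`.  Then for consecutive indices `i + 1 = j`,
`d i * r j − r i * d j = S i j`; in particular if `r i > 0` and `r j > 0` then
`d i / r i ≤ d j / r j ↔ S i j ≤ 0`. -/
theorem ext12_implies_strongly_exceptional_slopes {n : ℕ}
    (S : Matrix (Fin n) (Fin n) ℚ)
    (hupper : ∀ i k : Fin n, k < i → S i k = 0)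
    (hdiag : ∀ i : Fin n, S i i = 1)
    (ρ δ : Fin n → ℚ)
    (hrel : ∀ i k : Fin n, δ i * ρ k - δ k * ρ i = S i k - S k i)
    (r d : Fin n → ℚ)
    (hr : ∀ j : Fin n, r j = ∑ i ∈ Finset.Iic j, S⁻¹ i j * ρ i)
    (hd : ∀ j : Fin n, d j = ∑ i ∈ Finset.Iic j, S⁻¹ i j * δ i) :
    ∀ i j : Fin n, (i : ℕ) + 1 = (j : ℕ) →
      d i * r j - r i * d j = S i j ∧
        (0 < r i → 0 < r j → (d i / r i ≤ d j / r j ↔ S i j ≤ 0)) := by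
  -- S is block triangular (upper triangular)
  have hS : S.BlockTriangular id := fun i j h => hupper i j h
  have hdet : S.det = 1 := by
    rw [Matrix.det_of_upperTriangular hS]
    simp [hdiag]
  have hunit : IsUnit S.det := by rw [hdet]; exact isUnit_one
  haveI : Invertible S := S.invertibleOfIsUnitDet hunit
  set T := S⁻¹ with hT
  have hTtri : T.BlockTriangular id := Matrix.blockTriangular_inv_of_blockTriangular hS
  have hTupper : ∀ i k : Fin n, k < i → T i k = 0 := fun i k h => hTtri h
  have hST : S * T = 1 := Matrix.mul_nonsing_inv S hunit
  have hTS : T * S = 1 := Matrix.nonsing_inv_mul S hunit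
  -- diagonal of T is 1
  have hTdiag : ∀ i : Fin n, T i i = 1 := by
    intro i
    have h1 : (T * S) i i = 1 := by rw [hTS]; simp
    rw [Matrix.mul_apply] at h1
    rw [Finset.sum_eq_single i] at h1
    · simpa [hdiag i] using h1
    · intro b _ hb
      rcases lt_or_gt_of_ne hb with h | h
      · rw [hTupper i b h, zero_mul]
      · rw [hupper b i h, mul_zero]
    · simp
  -- sums over Iic can be extended to univ
  have hr' : ∀ j : Fin n, r j = ∑ i : Fin n, T i j * ρ i := by
    intro j
    rw [hr j]
    apply Finset.sum_subset (Finset.subset_univ _)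
    intro x _ hx
    simp only [Finset.mem_Iic, not_le] at hx
    rw [hTupper x j hx, zero_mul]
  have hd' : ∀ j : Fin n, d j = ∑ i : Fin n, T i j * δ i := by
    intro j
    rw [hd j]
    apply Finset.sum_subset (Finset.subset_univ _)
    intro x _ hx
    simp only [Finset.mem_Iic, not_le] at hx
    rw [hTupper x j hx, zero_mul]
  -- key: ∑ a, ∑ b, T a i * T b j * S a b = T j i
  have hkey : ∀ i j : Fin n, (∑ a : Fin n, ∑ b : Fin n, T a i * T b j * S a b) = T j i := by
    intro i j
    have : (∑ a : Fin n, ∑ b : Fin n, T a i * T b j * S a b)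
        = (Tᵀ * S * T) i j := by
      rw [Matrix.mul_apply]
      simp only [Matrix.mul_apply, Matrix.transpose_apply, Finset.sum_mul]
      rw [Finset.sum_comm]
      apply Finset.sum_congr rfl
      intro a _
      apply Finset.sum_congr rfl
      intro b _
      ring
    rw [this, Matrix.mul_assoc, hST, Matrix.mul_one, Matrix.transpose_apply]
  intro i j hij
  have hijlt : i < j := by
    rw [Fin.lt_def]; omega
  have hijne : i ≠ j := ne_of_lt hijlt
  -- T i j = - S i j
  have hTij : T i j = - S i j := by
    have h0 : (S * T) i j = 0 := by rw [hST]; simp [hijne]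
    rw [Matrix.mul_apply] at h0
    have hsub : ({i, j} : Finset (Fin n)) ⊆ Finset.univ := Finset.subset_univ _
    rw [← Finset.sum_subset hsub ?_] at h0
    · rw [Finset.sum_insert (by simp [hijne]), Finset.sum_singleton, hdiag i, hTdiag j,
        one_mul, mul_one] at h0
      linarith
    · intro x _ hx
      simp only [Finset.mem_insert, Finset.mem_singleton, not_or] at hx
      rcases lt_or_gt_of_ne hx.1 with h | h
      · -- x < i : S i x = 0
        rw [hupper i x h, zero_mul]
      · -- x > i, x ≠ j, so x > j : T x j = 0
        have : j < x := by
          have h1 : (i : ℕ) < (x : ℕ) := h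
          have h2 : (x : ℕ) ≠ (j : ℕ) := fun hh => hx.2 (Fin.ext hh)
          exact Fin.lt_def.mpr (by omega)
        rw [hTupper x j this, mul_zero]
  -- main identity
  have hmain : d i * r j - r i * d j = S i j := by
    rw [hr' i, hr' j, hd' i, hd' j, Finset.sum_mul_sum, Finset.sum_mul_sum,
      ← Finset.sum_sub_distrib]
    have : ∀ a : Fin n, ((∑ b : Fin n, (T a i * δ a) * (T b j * ρ b))
          - ∑ b : Fin n, (T a i * ρ a) * (T b j * δ b))
        = ∑ b : Fin n, (T a i * T b j * S a b - T a i * T b j * S b a) := by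
      intro a
      rw [← Finset.sum_sub_distrib]
      apply Finset.sum_congr rfl
      intro b _
      linear_combination (T a i * T b j) * hrel a b
    rw [Finset.sum_congr rfl (fun a _ => this a)]
    have h1 : (∑ a : Fin n, ∑ b : Fin n, (T a i * T b j * S a b - T a i * T b j * S b a))
        = (∑ a : Fin n, ∑ b : Fin n, T a i * T b j * S a b)
          - (∑ a : Fin n, ∑ b : Fin n, T a i * T b j * S b a) := by
      rw [← Finset.sum_sub_distrib]
      apply Finset.sum_congr rfl
      intro a _
      rw [Finset.sum_sub_distrib]
    rw [h1, hkey i j]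
    have h2 : (∑ a : Fin n, ∑ b : Fin n, T a i * T b j * S b a)
        = ∑ b : Fin n, ∑ a : Fin n, T b j * T a i * S b a := by
      rw [Finset.sum_comm]
      apply Finset.sum_congr rfl; intro b _
      apply Finset.sum_congr rfl; intro a _; ring
    rw [h2, hkey j i, hTupper j i hijlt, hTij]
    ring
  refine ⟨hmain, fun hri hrj => ?_⟩
  rw [div_le_div_iff₀ hri hrj]
  constructor
  · intro h; nlinarith
  · intro h; nlinarith
end

section
/- Let S be an n×n unit upper-triangular matrix over ℚ, and let r, d ∈ ℚⁿ satisfy r_i d_k − r_k d_i = (S⁻¹)_{i,k} − (S⁻¹)_{k,i} for all i, k. Define r^∨_j = ∑_{i=1}^{j} S_{i,j} r_i and d^∨_j = ∑_{i=1}^{j} S_{i,j} d_i for each j. Then for every j with 1 < j ≤ n one has d^∨_{j−1} r^∨_j − r^∨_{j−1} d^∨_j = S_{j−1,j}. In particular, if r^∨_{j−1} and r^∨_j are both positive or both negative, then d^∨_{j−1}/r^∨_{j−1} ≤ d^∨_j/r^∨_j if and only if S_{j−1,j} ≤ 0. -/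
/-!
Writing `ρ = r ᵥ* S` and `δ = d ᵥ* S` for the dual ranks and degrees, the wedge matrix
`ρ ⊗ δ - δ ⊗ ρ` is the congruence `Sᵀ (r ⊗ d - d ⊗ r) S = Sᵀ (S⁻¹ - S⁻¹ᵀ) S = Sᵀ - S`.
Above the diagonal `Sᵀ` vanishes, so `δ i ρ j - ρ i δ j = S i j` for `i < j`; when `ρ i` and
`ρ j` have the same sign, clearing denominators turns the slope comparison into the sign of
this minor.
-/

open Matrix

namespace Matrix

variable {n R : Type*} [Fintype n] [CommRing R]

theorem vecMulVec_vecMul_vecMul (S : Matrix n n R) (r d : n → R) :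
    vecMulVec (r ᵥ* S) (d ᵥ* S) = Sᵀ * vecMulVec r d * S := by
  rw [Matrix.mul_assoc, vecMulVec_mul, mul_vecMulVec, mulVec_transpose]

theorem transpose_mul_inv_sub_transpose_inv_mul [DecidableEq n] (S : Matrix n n R)
    (hS : IsUnit S.det) : Sᵀ * (S⁻¹ - S⁻¹ᵀ) * S = Sᵀ - S := by
  have hSS : Sᵀ * S⁻¹ᵀ = 1 := by
    rw [← transpose_mul, nonsing_inv_mul S hS, transpose_one]
  rw [Matrix.mul_sub, Matrix.sub_mul, Matrix.mul_assoc, nonsing_inv_mul S hS, hSS,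
    Matrix.mul_one, Matrix.one_mul]

theorem vecMulVec_vecMul_sub_vecMulVec_vecMul [DecidableEq n] (S : Matrix n n R)
    (hS : IsUnit S.det) (r d : n → R) (h : vecMulVec r d - vecMulVec d r = S⁻¹ - S⁻¹ᵀ) :
    vecMulVec (r ᵥ* S) (d ᵥ* S) - vecMulVec (d ᵥ* S) (r ᵥ* S) = Sᵀ - S := by
  rw [vecMulVec_vecMul_vecMul, vecMulVec_vecMul_vecMul, ← Matrix.sub_mul, ← Matrix.mul_sub, h,
    transpose_mul_inv_sub_transpose_inv_mul S hS]

theorem IsUpperTriangular.isUnit_det_of_diag_eq_one [LinearOrder n] {S : Matrix n n R}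
    (hS : S.IsUpperTriangular) (hdiag : ∀ i, S i i = 1) : IsUnit S.det := by
  simp [det_of_isUpperTriangular hS, hdiag]

theorem IsUpperTriangular.vecMul_apply [LinearOrder n] [LocallyFiniteOrderBot n]
    {S : Matrix n n R} (hS : S.IsUpperTriangular) (r : n → R) (j : n) :
    (r ᵥ* S) j = ∑ i ∈ Finset.Iic j, S i j * r i := by
  rw [vecMul, dotProduct]
  refine (Finset.sum_subset (Finset.subset_univ _) fun i _ hi => ?_).symm.trans
    (Finset.sum_congr rfl fun i _ => mul_comm _ _)
  rw [hS (not_le.1 (by simpa using hi)), mul_zero]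

end Matrix

theorem div_le_div_iff_of_mul_pos {K : Type*} [Field K] [LinearOrder K] [IsStrictOrderedRing K]
    {a b c d : K} (hbd : 0 < b * d) : a / b ≤ c / d ↔ a * d ≤ c * b := by
  have hb : b ≠ 0 := left_ne_zero_of_mul hbd.ne'
  have hd : d ≠ 0 := right_ne_zero_of_mul hbd.ne'
  rw [← mul_div_mul_right a b hd, ← mul_div_mul_right c d hb, mul_comm d b,
    div_le_div_iff_of_pos_right hbd]

/-- Let `S` be unit upper-triangular over `ℚ` and `r, d` satisfy
`r i * d k − r k * d i = (S⁻¹) i k − (S⁻¹) k i`.  Define the dual ranks and degrees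
`r∨ j = ∑_{i ≤ j} S i j * r i` and `d∨ j = ∑_{i ≤ j} S i j * d i`.  Then for
consecutive indices `i + 1 = j`, `d∨ i * r∨ j − r∨ i * d∨ j = S i j`; in particular
if `r∨ i` and `r∨ j` are both positive or both negative, then
`d∨ i / r∨ i ≤ d∨ j / r∨ j ↔ S i j ≤ 0`. -/
theorem strongly_exceptional_implies_ext12_slopes {n : ℕ}
    (S : Matrix (Fin n) (Fin n) ℚ)
    (hupper : ∀ i k : Fin n, k < i → S i k = 0)
    (hdiag : ∀ i : Fin n, S i i = 1)
    (r d : Fin n → ℚ)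
    (hrel : ∀ i k : Fin n, r i * d k - r k * d i = S⁻¹ i k - S⁻¹ k i)
    (rv dv : Fin n → ℚ)
    (hrv : ∀ j : Fin n, rv j = ∑ i ∈ Finset.Iic j, S i j * r i)
    (hdv : ∀ j : Fin n, dv j = ∑ i ∈ Finset.Iic j, S i j * d i) :
    ∀ i j : Fin n, (i : ℕ) + 1 = (j : ℕ) →
      dv i * rv j - rv i * dv j = S i j ∧
        (((0 < rv i ∧ 0 < rv j) ∨ (rv i < 0 ∧ rv j < 0)) →
          (dv i / rv i ≤ dv j / rv j ↔ S i j ≤ 0)) := by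
  intro i j hij
  have hS : S.IsUpperTriangular := hupper
  have hrv' : rv = r ᵥ* S := funext fun k => by rw [hrv, hS.vecMul_apply]
  have hdv' : dv = d ᵥ* S := funext fun k => by rw [hdv, hS.vecMul_apply]
  have hanti : vecMulVec r d - vecMulVec d r = S⁻¹ - S⁻¹ᵀ := by
    ext i k
    simp only [Matrix.sub_apply, vecMulVec_apply, transpose_apply, ← hrel i k, mul_comm (d i)]
  have hwedge := congrFun₂ (vecMulVec_vecMul_sub_vecMulVec_vecMul S
    (hS.isUnit_det_of_diag_eq_one hdiag) r d hanti) i j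
  have hdet : dv i * rv j - rv i * dv j = S i j := by
    simp only [Matrix.sub_apply, vecMulVec_apply, transpose_apply, ← hrv', ← hdv',
      hupper j i (Fin.lt_def.2 (by omega))] at hwedge
    linarith
  refine ⟨hdet, fun hsign => ?_⟩
  rw [div_le_div_iff_of_mul_pos (mul_pos_iff.2 hsign), mul_comm (dv j), ← sub_nonpos, hdet]
end
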